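/- Fix x, x̃ ∈ E. On a probability space, let ℓ be a random index uniformly distributed on {1,…,N}; for each j let a_j and c_j be ℝ^{m_j}-valued square-integrable random vectors, and for each i let b_i and d_i be E-valued square-integrable random vectors, all with mean zero, such that ℓ and all the a_j, b_i, c_j, d_i are mutually independent. Define the random vector e = ( ∇f_ℓ(x + c|_{𝒩_ℓ}) − ∇f_ℓ(x) ) + d_ℓ − ( ∇f_ℓ(x̃ + a|_{𝒩_ℓ}) − ∇f_ℓ(x̃) ) − b_ℓ + (1/N)·∑_{i=1}^N ( ∇f_i(x̃ + a|_{𝒩_i}) − ∇f_i(x̃) ) + (1/N)·∑_{i=1}^N b_i. Then E‖e‖² ≤ 2·L̄²·E[ ∑_{j ∈ 𝒩_ℓ} ‖c_j‖² ] + 2·L̄²·E[ ∑_{j ∈ 𝒩_ℓ} ‖a_j‖² ] + E‖d_ℓ‖² + 2·E‖b_ℓ‖² + (2/N²)·∑_{i=1}^N E‖b_i‖², where the expectations are over both ℓ and the error random vectors. -/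

import Mathlib

open MeasureTheory ProbabilityTheory

/-- The global state space `E = ℝ^{m 0} × ⋯ × ℝ^{m (N-1)}` of the `N`-node network,
realized as a Euclidean space over the sigma type of block coordinates. -/
abbrev GlobalState (N : ℕ) (m : Fin N → ℕ) : Type :=
  EuclideanSpace ℝ ((j : Fin N) × Fin (m j))

/-- `addOn x u S` is `x + u|_S`: the global state obtained from `x` by adding the
block `u j` to the `j`-th block of `x` for each `j ∈ S`, leaving other blocks
unchanged. -/
noncomputable def addOn {N : ℕ} {m : Fin N → ℕ} (x : GlobalState N m)
    (u : ∀ j : Fin N, EuclideanSpace ℝ (Fin (m j))) (S : Finset (Fin N)) :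
    GlobalState N m :=
  WithLp.toLp 2 (fun p => if p.1 ∈ S then x p + u p.1 p.2 else x p)

/-- Index type for the joint family of random objects: the random node index `sel`,
and the quantization-error vectors `a j`, `b i`, `c j`, `d i`. -/
inductive QErrIdx (N : ℕ) where
  | sel : QErrIdx N
  | qa : Fin N → QErrIdx N
  | qb : Fin N → QErrIdx N
  | qc : Fin N → QErrIdx N
  | qd : Fin N → QErrIdx N

/-- Value type of each random object in the family. -/
def QErrIdx.type (N : ℕ) (m : Fin N → ℕ) : QErrIdx N → Type
  | .sel => Fin N
  | .qa j => EuclideanSpace ℝ (Fin (m j))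
  | .qb _ => GlobalState N m
  | .qc j => EuclideanSpace ℝ (Fin (m j))
  | .qd _ => GlobalState N m

noncomputable instance (N : ℕ) (m : Fin N → ℕ) :
    ∀ i : QErrIdx N, MeasurableSpace (QErrIdx.type N m i)
  | .sel => inferInstanceAs (MeasurableSpace (Fin N))
  | .qa j => inferInstanceAs (MeasurableSpace (EuclideanSpace ℝ (Fin (m j))))
  | .qb _ => inferInstanceAs (MeasurableSpace (GlobalState N m))
  | .qc j => inferInstanceAs (MeasurableSpace (EuclideanSpace ℝ (Fin (m j))))
  | .qd _ => inferInstanceAs (MeasurableSpace (GlobalState N m))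

/-- The joint family of random objects: the random node index `ℓ` together with all
the quantization-error random vectors `a j`, `b i`, `c j`, `d i`. -/
def QErrIdx.rv {Ω : Type*} {N : ℕ} {m : Fin N → ℕ}
    (ℓ : Ω → Fin N)
    (a c : Ω → ∀ j : Fin N, EuclideanSpace ℝ (Fin (m j)))
    (b d : Ω → Fin N → GlobalState N m) :
    ∀ i : QErrIdx N, Ω → QErrIdx.type N m i
  | .sel => ℓ
  | .qa j => fun ω => a ω j
  | .qb i => fun ω => b ω i
  | .qc j => fun ω => c ω j
  | .qd i => fun ω => d ω i

open Finset
open scoped RealInnerProductSpace ENNReal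

/-! When node `i` is selected, the error splits as `S i + d i + V i`, where `S i` depends only on
`(a, c)` and `V i = mean b - b i`. The three pieces are independent and the last two are centred,
so they are orthogonal in `L²`, and averaging over the uniform node index gives
`E‖e‖² = N⁻¹ ∑ i (E‖S i‖² + E‖d i‖² + E‖V i‖²)`. Lipschitz continuity bounds each gradient
increment by `L̄² ∑_{j ∈ 𝒩 i} ‖·‖²`; the averaged increments inside `S i` and the term `V i` are
controlled only after summing over `i`, through `∑ i ‖mean v - v i‖² ≤ ∑ i ‖v i‖²`. -/

section MeanDeviation

variable {ι E : Type*} [Fintype ι]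

noncomputable def meanDeviation [AddCommGroup E] [Module ℝ E] (v : ι → E) (i : ι) : E :=
  (1 / Fintype.card ι : ℝ) • ∑ k, v k - v i

theorem sum_eq_card_smul_mean [AddCommGroup E] [Module ℝ E] (v : ι → E) :
    ∑ k, v k = (Fintype.card ι : ℝ) • (1 / Fintype.card ι : ℝ) • ∑ k, v k := by
  rcases isEmpty_or_nonempty ι with hι | hι
  · simp
  · rw [smul_smul, mul_one_div_cancel (by positivity), one_smul]

variable [NormedAddCommGroup E] [InnerProductSpace ℝ E]

theorem sum_norm_meanDeviation_sq_le (v : ι → E) :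
    ∑ i, ‖meanDeviation v i‖ ^ 2 ≤ ∑ i, ‖v i‖ ^ 2 := by
  set t : E := (1 / Fintype.card ι : ℝ) • ∑ k, v k with ht
  have hsum : ∑ k, v k = (Fintype.card ι : ℝ) • t := sum_eq_card_smul_mean v
  calc ∑ i, ‖meanDeviation v i‖ ^ 2
      = ∑ i, (‖t‖ ^ 2 - 2 * ⟪t, v i⟫ + ‖v i‖ ^ 2) := by
        simp_rw [meanDeviation, ← ht, norm_sub_sq_real]
    _ = ∑ i, ‖v i‖ ^ 2 - Fintype.card ι * ‖t‖ ^ 2 := by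
        rw [sum_add_distrib, sum_sub_distrib, ← mul_sum, ← inner_sum, hsum,
          real_inner_smul_right, real_inner_self_eq_norm_sq]
        simp only [sum_const, card_univ, nsmul_eq_mul]
        ring
    _ ≤ ∑ i, ‖v i‖ ^ 2 := sub_le_self _ (by positivity)

end MeanDeviation

section SecondMoments

variable {Ω ι E : Type*} [MeasurableSpace Ω] {μ : Measure Ω} [NormedAddCommGroup E]

theorem memLp_two_of_norm_sq_le {X : Ω → E} {F : Ω → ℝ} (hX : AEStronglyMeasurable X μ)
    (hF : Integrable F μ) (h : ∀ ω, ‖X ω‖ ^ 2 ≤ F ω) : MemLp X 2 μ :=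
  (memLp_two_iff_integrable_sq_norm hX).2 <| hF.mono' (hX.norm.pow 2) <|
    ae_of_all _ fun ω => by simpa only [Real.norm_eq_abs, abs_pow, abs_norm] using h ω

theorem integral_norm_add_sq_le {X Y : Ω → E} (hX : MemLp X 2 μ) (hY : MemLp Y 2 μ) :
    ∫ ω, ‖X ω + Y ω‖ ^ 2 ∂μ ≤ 2 * ∫ ω, ‖X ω‖ ^ 2 ∂μ + 2 * ∫ ω, ‖Y ω‖ ^ 2 ∂μ := by
  have hX2 := (hX.integrable_norm_pow two_ne_zero).const_mul 2
  have hY2 := (hY.integrable_norm_pow two_ne_zero).const_mul 2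
  rw [← integral_const_mul, ← integral_const_mul, ← integral_add hX2 hY2]
  refine integral_mono ((hX.add hY).integrable_norm_pow two_ne_zero) (hX2.add hY2) fun ω => ?_
  calc ‖X ω + Y ω‖ ^ 2 ≤ (‖X ω‖ + ‖Y ω‖) ^ 2 := by gcongr; exact norm_add_le _ _
    _ ≤ 2 * ‖X ω‖ ^ 2 + 2 * ‖Y ω‖ ^ 2 := by linarith [add_sq_le (a := ‖X ω‖) (b := ‖Y ω‖)]

variable [Fintype ι]

theorem memLp_meanDeviation [NormedSpace ℝ E] {p : ℝ≥0∞} {v : Ω → ι → E}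
    (hv : ∀ k, MemLp (fun ω => v ω k) p μ) (i : ι) :
    MemLp (fun ω => meanDeviation (v ω) i) p μ :=
  ((memLp_finsetSum univ fun k _ => hv k).const_smul _).sub (hv i)

theorem integral_meanDeviation_eq_zero [NormedSpace ℝ E] [CompleteSpace E] {v : Ω → ι → E}
    (hv : ∀ k, Integrable (fun ω => v ω k) μ) (hv0 : ∀ k, ∫ ω, v ω k ∂μ = 0) (i : ι) :
    ∫ ω, meanDeviation (v ω) i ∂μ = 0 := by
  have hsum := integrable_finsetSum univ fun k _ => hv k
  simp only [meanDeviation]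
  rw [integral_sub (f := fun ω => (1 / (Fintype.card ι : ℝ)) • ∑ k, v ω k) (hsum.smul _) (hv i),
    integral_smul, integral_finsetSum univ fun k _ => hv k]
  simp [hv0]

theorem sum_integral_norm_meanDeviation_sq_le [InnerProductSpace ℝ E] [IsFiniteMeasure μ]
    {v : Ω → ι → E} (hv : ∀ k, MemLp (fun ω => v ω k) 2 μ) :
    ∑ i, ∫ ω, ‖meanDeviation (v ω) i‖ ^ 2 ∂μ ≤ ∑ i, ∫ ω, ‖v ω i‖ ^ 2 ∂μ := by
  have hdev (i : ι) := (memLp_meanDeviation hv i).integrable_norm_pow two_ne_zero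
  have hsq (i : ι) := (hv i).integrable_norm_pow two_ne_zero
  rw [← integral_finsetSum univ fun i _ => hdev i, ← integral_finsetSum univ fun i _ => hsq i]
  exact integral_mono (integrable_finsetSum univ fun i _ => hdev i)
    (integrable_finsetSum univ fun i _ => hsq i) fun ω => sum_norm_meanDeviation_sq_le (v ω)

end SecondMoments

section Independence

variable {Ω E : Type*} [MeasurableSpace Ω] {μ : Measure Ω}
  [NormedAddCommGroup E] [InnerProductSpace ℝ E] [CompleteSpace E]
  [MeasurableSpace E] [BorelSpace E]

theorem ProbabilityTheory.IndepFun.integral_inner_eq_zero {X Y : Ω → E} (h : X ⟂ᵢ[μ] Y)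
    (hX : Integrable X μ) (hY : Integrable Y μ) (hY0 : μ[Y] = 0) :
    ∫ ω, ⟪X ω, Y ω⟫ ∂μ = 0 := by
  have := h.integral_bilin hX hY (innerSL ℝ)
  rw [hY0, map_zero] at this
  exact this

theorem ProbabilityTheory.IndepFun.integral_norm_add_sq [IsFiniteMeasure μ] {X Y : Ω → E}
    (h : X ⟂ᵢ[μ] Y) (hX : MemLp X 2 μ) (hY : MemLp Y 2 μ) (hY0 : μ[Y] = 0) :
    ∫ ω, ‖X ω + Y ω‖ ^ 2 ∂μ = ∫ ω, ‖X ω‖ ^ 2 ∂μ + ∫ ω, ‖Y ω‖ ^ 2 ∂μ := by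
  have hX1 := hX.integrable one_le_two
  have hY1 := hY.integrable one_le_two
  have hX2 := hX.integrable_norm_pow two_ne_zero
  have hinner : Integrable (fun ω => 2 * ⟪X ω, Y ω⟫) μ :=
    (h.integrable_bilin hX1 hY1 (innerSL ℝ)).const_mul 2
  calc ∫ ω, ‖X ω + Y ω‖ ^ 2 ∂μ
      = ∫ ω, ‖X ω‖ ^ 2 ∂μ + 2 * ∫ ω, ⟪X ω, Y ω⟫ ∂μ + ∫ ω, ‖Y ω‖ ^ 2 ∂μ := by
        simp_rw [norm_add_sq_real]
        rw [integral_add (f := fun ω => ‖X ω‖ ^ 2 + 2 * ⟪X ω, Y ω⟫) (hX2.add hinner)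
            (hY.integrable_norm_pow two_ne_zero), integral_add hX2 hinner, integral_const_mul]
    _ = ∫ ω, ‖X ω‖ ^ 2 ∂μ + ∫ ω, ‖Y ω‖ ^ 2 ∂μ := by
        rw [h.integral_inner_eq_zero hX1 hY1 hY0, mul_zero, add_zero]

end Independence

section UniformIndex

variable {Ω ι γ : Type*} [MeasurableSpace Ω] {μ : Measure Ω} [Fintype ι] [DecidableEq ι]
  [MeasurableSpace ι] [DiscreteMeasurableSpace ι] [MeasurableSpace γ]

theorem integral_comp_uniform_index {ℓ : Ω → ι} (hℓ : Measurable ℓ)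
    (hunif : ∀ k, μ {ω | ℓ ω = k} = (Fintype.card ι : ℝ≥0∞)⁻¹)
    {Ψ : Ω → γ} (hind : ℓ ⟂ᵢ[μ] Ψ) {F : ι → γ → ℝ} (hFm : ∀ i, Measurable (F i))
    (hF : ∀ i, Integrable (fun ω => F i (Ψ ω)) μ) :
    ∫ ω, F (ℓ ω) (Ψ ω) ∂μ = (Fintype.card ι : ℝ)⁻¹ * ∑ i, ∫ ω, F i (Ψ ω) ∂μ := by
  let δ (i : ι) : ι → ℝ := fun k => if k = i then 1 else 0
  have hδ (i : ι) : Measurable (δ i ∘ ℓ) := (measurable_of_countable _).comp hℓ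
  have hsplit (ω : Ω) : F (ℓ ω) (Ψ ω) = ∑ i, (δ i ∘ ℓ * (F i ∘ Ψ)) ω := by simp [δ]
  have hevent (i : ι) : ∫ ω, (δ i ∘ ℓ) ω ∂μ = (Fintype.card ι : ℝ)⁻¹ := by
    have : δ i ∘ ℓ = (ℓ ⁻¹' {i}).indicator 1 := by
      ext ω
      by_cases h : ℓ ω = i <;> simp [δ, h]
    rw [this, integral_indicator_one (hℓ (measurableSet_singleton i)), measureReal_def]
    change (μ {ω | ℓ ω = i}).toReal = _
    rw [hunif, ENNReal.toReal_inv, ENNReal.toReal_natCast]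
  simp_rw [hsplit]
  rw [integral_finsetSum _ fun i _ => ?_, mul_sum]
  · refine sum_congr rfl fun i _ => ?_
    have hi : (δ i ∘ ℓ) ⟂ᵢ[μ] (F i ∘ Ψ) := hind.comp (measurable_of_countable _) (hFm i)
    rw [hi.integral_mul_eq_mul_integral (hδ i).aestronglyMeasurable (hF i).aestronglyMeasurable,
      hevent]
    rfl
  · refine (hF i).bdd_mul (c := 1) (hδ i).aestronglyMeasurable (ae_of_all _ fun ω => ?_)
    show ‖δ i (ℓ ω)‖ ≤ 1
    by_cases h : ℓ ω = i <;> simp [δ, h]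

end UniformIndex

section Network

variable {N : ℕ} {m : Fin N → ℕ}

abbrev BlockVec (N : ℕ) (m : Fin N → ℕ) : Type := ∀ j : Fin N, EuclideanSpace ℝ (Fin (m j))

theorem norm_addOn_sub_sq (x : GlobalState N m) (u : BlockVec N m) (S : Finset (Fin N)) :
    ‖addOn x u S - x‖ ^ 2 = ∑ j ∈ S, ‖u j‖ ^ 2 := by
  have hblock (j : Fin N) :
      ∑ k, ‖(addOn x u S - x) ⟨j, k⟩‖ ^ 2 = if j ∈ S then ‖u j‖ ^ 2 else 0 := by
    split_ifs with hj <;> simp [addOn, hj, EuclideanSpace.norm_sq_eq]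
  rw [EuclideanSpace.norm_sq_eq, Fintype.sum_sigma]
  simp_rw [hblock]
  rw [sum_ite_mem, univ_inter]

theorem continuous_addOn (x : GlobalState N m) (S : Finset (Fin N)) :
    Continuous fun u : BlockVec N m => addOn x u S := by
  refine (PiLp.continuous_toLp 2 _).comp (continuous_pi fun p => ?_)
  by_cases hp : p.1 ∈ S <;> simp only [hp, if_true, if_false]
  · exact continuous_const.add ((EuclideanSpace.proj p.2).continuous.comp (continuous_apply p.1))
  · exact continuous_const

theorem LipschitzWith.norm_sub_addOn_sq_le {F : Type*} [SeminormedAddCommGroup F] {K : NNReal}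
    {G : GlobalState N m → F} (hG : LipschitzWith K G) (x : GlobalState N m) (u : BlockVec N m)
    (S : Finset (Fin N)) :
    ‖G (addOn x u S) - G x‖ ^ 2 ≤ K ^ 2 * ∑ j ∈ S, ‖u j‖ ^ 2 := by
  rw [← norm_addOn_sub_sq, ← mul_pow]
  gcongr
  simpa only [dist_eq_norm] using hG.dist_le_mul (addOn x u S) x

variable (g : Fin N → GlobalState N m → GlobalState N m) (𝒩 : Fin N → Finset (Fin N))

noncomputable def gradIncrement (x : GlobalState N m) (i : Fin N) (u : BlockVec N m) :
    GlobalState N m :=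
  g i (addOn x u (𝒩 i)) - g i x

/-- `e` at the selected node `i`, regrouped so that the first two summands depend only on `(a, c)`
and the last only on `b`. -/
noncomputable def nodeError (x xt : GlobalState N m) (i : Fin N) (a c : BlockVec N m)
    (b d : Fin N → GlobalState N m) : GlobalState N m :=
  gradIncrement g 𝒩 x i c + meanDeviation (fun k => gradIncrement g 𝒩 xt k a) i + d i
    + meanDeviation b i

theorem nodeError_eq (x xt : GlobalState N m) (i : Fin N) (a c : BlockVec N m)
    (b d : Fin N → GlobalState N m) :
    nodeError g 𝒩 x xt i a c b d =
      (g i (addOn x c (𝒩 i)) - g i x) + d i - (g i (addOn xt a (𝒩 i)) - g i xt) - b i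
        + (1 / N : ℝ) • ∑ k, (g k (addOn xt a (𝒩 k)) - g k xt) + (1 / N : ℝ) • ∑ k, b k := by
  simp only [nodeError, gradIncrement, meanDeviation, Fintype.card_fin]
  abel

variable {g 𝒩}

theorem continuous_gradIncrement {i : Fin N} (hg : Continuous (g i)) (x : GlobalState N m) :
    Continuous (gradIncrement g 𝒩 x i) :=
  (hg.comp (continuous_addOn x (𝒩 i))).sub continuous_const

theorem continuous_nodeError (hg : ∀ i, Continuous (g i)) (x xt : GlobalState N m) (i : Fin N) :
    Continuous fun q : ((BlockVec N m × BlockVec N m) × (Fin N → GlobalState N m)) ×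
        (Fin N → GlobalState N m) => nodeError g 𝒩 x xt i q.1.1.1 q.1.1.2 q.2 q.1.2 := by
  have := fun k => continuous_gradIncrement (𝒩 := 𝒩) (hg k)
  simp only [nodeError, meanDeviation]
  fun_prop

variable {Ω : Type*} [MeasurableSpace Ω] {P : Measure Ω}

theorem memLp_gradIncrement {K : NNReal} {i : Fin N} (hg : LipschitzWith K (g i))
    (x : GlobalState N m) {u : Ω → BlockVec N m} (hu : ∀ j, MemLp (fun ω => u ω j) 2 P) :
    MemLp (fun ω => gradIncrement g 𝒩 x i (u ω)) 2 P := by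
  refine memLp_two_of_norm_sq_le ?_ ((integrable_finsetSum (𝒩 i) fun j _ =>
    (hu j).integrable_norm_pow two_ne_zero).const_mul (K ^ 2 : ℝ))
    fun ω => hg.norm_sub_addOn_sq_le x (u ω) (𝒩 i)
  exact (continuous_gradIncrement hg.continuous x).comp_aestronglyMeasurable
    (aemeasurable_pi_lambda _ fun j => (hu j).aemeasurable).aestronglyMeasurable

theorem integral_norm_sq_gradIncrement_le {K : NNReal} {Lbar : ℝ} {i : Fin N}
    (hg : LipschitzWith K (g i)) (hK : (K : ℝ) ≤ Lbar) (x : GlobalState N m)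
    {u : Ω → BlockVec N m} (hu : ∀ j, MemLp (fun ω => u ω j) 2 P) :
    ∫ ω, ‖gradIncrement g 𝒩 x i (u ω)‖ ^ 2 ∂P ≤ Lbar ^ 2 * ∫ ω, ∑ j ∈ 𝒩 i, ‖u ω j‖ ^ 2 ∂P := by
  rw [← integral_const_mul]
  refine integral_mono ((memLp_gradIncrement hg x hu).integrable_norm_pow two_ne_zero)
    ((integrable_finsetSum (𝒩 i) fun j _ => (hu j).integrable_norm_pow two_ne_zero).const_mul _)
    fun ω => (hg.norm_sub_addOn_sq_le x (u ω) (𝒩 i)).trans ?_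
  gcongr

variable {Lc : Fin N → NNReal} {x xt : GlobalState N m}
  {a c : Ω → BlockVec N m} {b d : Ω → Fin N → GlobalState N m}

theorem memLp_nodeError (hLip : ∀ i, LipschitzWith (Lc i) (g i))
    (ha : ∀ j, MemLp (fun ω => a ω j) 2 P) (hc : ∀ j, MemLp (fun ω => c ω j) 2 P)
    (hb : ∀ i, MemLp (fun ω => b ω i) 2 P) (hd : ∀ i, MemLp (fun ω => d ω i) 2 P) (i : Fin N) :
    MemLp (fun ω => nodeError g 𝒩 x xt i (a ω) (c ω) (b ω) (d ω)) 2 P :=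
  (((memLp_gradIncrement (hLip i) x hc).add
    (memLp_meanDeviation (fun k => memLp_gradIncrement (hLip k) xt ha) i)).add (hd i)).add
    (memLp_meanDeviation hb i)

end Network

namespace QErrIdx

variable {Ω : Type*} [MeasurableSpace Ω] {P : Measure Ω} {N : ℕ} {m : Fin N → ℕ}
  {ℓ : Ω → Fin N} {a c : Ω → BlockVec N m} {b d : Ω → Fin N → GlobalState N m}

theorem aemeasurable_rv (hℓ : Measurable ℓ) (ha : ∀ j, AEMeasurable (fun ω => a ω j) P)
    (hc : ∀ j, AEMeasurable (fun ω => c ω j) P) (hb : ∀ i, AEMeasurable (fun ω => b ω i) P)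
    (hd : ∀ i, AEMeasurable (fun ω => d ω i) P) :
    ∀ i, AEMeasurable (rv ℓ a c b d i) P
  | .sel => hℓ.aemeasurable
  | .qa j => ha j
  | .qb i => hb i
  | .qc j => hc j
  | .qd i => hd i

theorem indepFun_sel_rest (hindep : iIndepFun (rv ℓ a c b d) P)
    (hmeas : ∀ i, AEMeasurable (rv ℓ a c b d i) P) :
    ℓ ⟂ᵢ[P] fun ω => (((a ω, c ω), d ω), b ω) := by
  classical
  set S : Finset (QErrIdx N) := univ.image qa ∪ univ.image qc ∪ univ.image qd ∪ univ.image qb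
  have h := hindep.indepFun_finset₀ {sel} S (by simp [S]) hmeas
  have hφ : Measurable fun v : ∀ i : ({sel} : Finset (QErrIdx N)), type N m i =>
    (v ⟨sel, by simp⟩ : Fin N) := by fun_prop
  have hψ : Measurable fun v : ∀ i : S, type N m i =>
    ((((fun j => v ⟨qa j, by simp [S]⟩, fun j => v ⟨qc j, by simp [S]⟩) :
        BlockVec N m × BlockVec N m),
      (fun i => v ⟨qd i, by simp [S]⟩ : Fin N → GlobalState N m)),
      (fun i => v ⟨qb i, by simp [S]⟩ : Fin N → GlobalState N m)) := by fun_prop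
  exact h.comp hφ hψ

theorem indepFun_ac_d (hindep : iIndepFun (rv ℓ a c b d) P)
    (hmeas : ∀ i, AEMeasurable (rv ℓ a c b d i) P) :
    (fun ω => (a ω, c ω)) ⟂ᵢ[P] d := by
  classical
  set S : Finset (QErrIdx N) := univ.image qa ∪ univ.image qc
  set T : Finset (QErrIdx N) := univ.image qd
  have hST : Disjoint S T := by
    simp only [S, T, disjoint_left, mem_union, mem_image]
    rintro _ (⟨_, _, rfl⟩ | ⟨_, _, rfl⟩) ⟨_, _, ⟨⟩⟩
  have hφ : Measurable fun v : ∀ i : S, type N m i =>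
    ((fun j => v ⟨qa j, by simp [S]⟩, fun j => v ⟨qc j, by simp [S]⟩) :
      BlockVec N m × BlockVec N m) := by fun_prop
  have hψ : Measurable fun v : ∀ i : T, type N m i =>
    (fun i => v ⟨qd i, by simp [T]⟩ : Fin N → GlobalState N m) := by fun_prop
  exact (hindep.indepFun_finset₀ S T hST hmeas).comp hφ hψ

theorem indepFun_acd_b (hindep : iIndepFun (rv ℓ a c b d) P)
    (hmeas : ∀ i, AEMeasurable (rv ℓ a c b d i) P) :
    (fun ω => ((a ω, c ω), d ω)) ⟂ᵢ[P] b := by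
  classical
  set S : Finset (QErrIdx N) := univ.image qa ∪ univ.image qc ∪ univ.image qd
  set T : Finset (QErrIdx N) := univ.image qb
  have hST : Disjoint S T := by
    simp only [S, T, disjoint_left, mem_union, mem_image]
    rintro _ ((⟨_, _, rfl⟩ | ⟨_, _, rfl⟩) | ⟨_, _, rfl⟩) ⟨_, _, ⟨⟩⟩
  have hφ : Measurable fun v : ∀ i : S, type N m i =>
    (((fun j => v ⟨qa j, by simp [S]⟩, fun j => v ⟨qc j, by simp [S]⟩),
      fun i => v ⟨qd i, by simp [S]⟩) :
      (BlockVec N m × BlockVec N m) × (Fin N → GlobalState N m)) := by fun_prop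
  have hψ : Measurable fun v : ∀ i : T, type N m i =>
    (fun i => v ⟨qb i, by simp [T]⟩ : Fin N → GlobalState N m) := by fun_prop
  exact (hindep.indepFun_finset₀ S T hST hmeas).comp hφ hψ

end QErrIdx

section NodeErrorMoment

variable {N : ℕ} {m : Fin N → ℕ} {g : Fin N → GlobalState N m → GlobalState N m}
  {𝒩 : Fin N → Finset (Fin N)} {Lc : Fin N → NNReal} {x xt : GlobalState N m}
  {Ω : Type*} [MeasurableSpace Ω] {P : Measure Ω} [IsFiniteMeasure P]
  {a c : Ω → BlockVec N m} {b d : Ω → Fin N → GlobalState N m}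

theorem integral_norm_sq_nodeError (hLip : ∀ i, LipschitzWith (Lc i) (g i))
    (ha : ∀ j, MemLp (fun ω => a ω j) 2 P) (hc : ∀ j, MemLp (fun ω => c ω j) 2 P)
    (hb : ∀ i, MemLp (fun ω => b ω i) 2 P) (hd : ∀ i, MemLp (fun ω => d ω i) 2 P)
    (hb0 : ∀ i, ∫ ω, b ω i ∂P = 0) (hd0 : ∀ i, ∫ ω, d ω i ∂P = 0)
    (hac_d : (fun ω => (a ω, c ω)) ⟂ᵢ[P] d) (hacd_b : (fun ω => ((a ω, c ω), d ω)) ⟂ᵢ[P] b)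
    (i : Fin N) :
    ∫ ω, ‖nodeError g 𝒩 x xt i (a ω) (c ω) (b ω) (d ω)‖ ^ 2 ∂P =
      ∫ ω, ‖gradIncrement g 𝒩 x i (c ω)
          + meanDeviation (fun k => gradIncrement g 𝒩 xt k (a ω)) i‖ ^ 2 ∂P
        + ∫ ω, ‖d ω i‖ ^ 2 ∂P + ∫ ω, ‖meanDeviation (b ω) i‖ ^ 2 ∂P := by
  have hS : Continuous fun q : BlockVec N m × BlockVec N m =>
      gradIncrement g 𝒩 x i q.2 + meanDeviation (fun k => gradIncrement g 𝒩 xt k q.1) i := by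
    have := fun k => continuous_gradIncrement (𝒩 := 𝒩) (hLip k).continuous
    simp only [meanDeviation]
    fun_prop
  have hV : Continuous fun w : Fin N → GlobalState N m => meanDeviation w i := by
    simp only [meanDeviation]
    fun_prop
  have hSL2 : MemLp (fun ω => gradIncrement g 𝒩 x i (c ω)
      + meanDeviation (fun k => gradIncrement g 𝒩 xt k (a ω)) i) 2 P :=
    (memLp_gradIncrement (hLip i) x hc).add
      (memLp_meanDeviation (fun k => memLp_gradIncrement (hLip k) xt ha) i)
  have hS_d : (fun ω => gradIncrement g 𝒩 x i (c ω)
      + meanDeviation (fun k => gradIncrement g 𝒩 xt k (a ω)) i) ⟂ᵢ[P] fun ω => d ω i :=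
    hac_d.comp hS.measurable (measurable_pi_apply i)
  have hSd_V : (fun ω => gradIncrement g 𝒩 x i (c ω)
      + meanDeviation (fun k => gradIncrement g 𝒩 xt k (a ω)) i + d ω i)
      ⟂ᵢ[P] fun ω => meanDeviation (b ω) i :=
    hacd_b.comp ((hS.measurable.comp measurable_fst).add
      ((measurable_pi_apply i).comp measurable_snd)) hV.measurable
  simp only [nodeError]
  rw [hSd_V.integral_norm_add_sq (hSL2.add (hd i)) (memLp_meanDeviation hb i)
      (integral_meanDeviation_eq_zero (fun k => (hb k).integrable one_le_two) hb0 i),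
    hS_d.integral_norm_add_sq hSL2 (hd i) (hd0 i)]

theorem sum_integral_norm_sq_nodeError_le (hLip : ∀ i, LipschitzWith (Lc i) (g i)) {Lbar : ℝ}
    (hLbar : ∀ i, (Lc i : ℝ) ≤ Lbar)
    (ha : ∀ j, MemLp (fun ω => a ω j) 2 P) (hc : ∀ j, MemLp (fun ω => c ω j) 2 P)
    (hb : ∀ i, MemLp (fun ω => b ω i) 2 P) (hd : ∀ i, MemLp (fun ω => d ω i) 2 P)
    (hb0 : ∀ i, ∫ ω, b ω i ∂P = 0) (hd0 : ∀ i, ∫ ω, d ω i ∂P = 0)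
    (hac_d : (fun ω => (a ω, c ω)) ⟂ᵢ[P] d) (hacd_b : (fun ω => ((a ω, c ω), d ω)) ⟂ᵢ[P] b) :
    ∑ i, ∫ ω, ‖nodeError g 𝒩 x xt i (a ω) (c ω) (b ω) (d ω)‖ ^ 2 ∂P ≤
      ∑ i, (2 * Lbar ^ 2 * ∫ ω, ∑ j ∈ 𝒩 i, ‖c ω j‖ ^ 2 ∂P
        + 2 * Lbar ^ 2 * ∫ ω, ∑ j ∈ 𝒩 i, ‖a ω j‖ ^ 2 ∂P
        + ∫ ω, ‖d ω i‖ ^ 2 ∂P + ∫ ω, ‖b ω i‖ ^ 2 ∂P) := by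
  have hT := fun k => memLp_gradIncrement (𝒩 := 𝒩) (hLip k) xt ha
  have hS := sum_le_sum fun i (_ : i ∈ univ) =>
    integral_norm_add_sq_le (memLp_gradIncrement (𝒩 := 𝒩) (hLip i) x hc) (memLp_meanDeviation hT i)
  have hC := sum_le_sum fun i (_ : i ∈ univ) =>
    integral_norm_sq_gradIncrement_le (𝒩 := 𝒩) (hLip i) (hLbar i) x hc
  have hA := sum_le_sum fun i (_ : i ∈ univ) =>
    integral_norm_sq_gradIncrement_le (𝒩 := 𝒩) (hLip i) (hLbar i) xt ha
  have hW := sum_integral_norm_meanDeviation_sq_le hT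
  have hV := sum_integral_norm_meanDeviation_sq_le hb
  simp only [integral_norm_sq_nodeError hLip ha hc hb hd hb0 hd0 hac_d hacd_b, sum_add_distrib,
    ← mul_sum] at hS hC hA ⊢
  linarith

theorem integral_norm_sq_nodeError_selected_le (hLip : ∀ i, LipschitzWith (Lc i) (g i))
    {Lbar : ℝ} (hLbar : ∀ i, (Lc i : ℝ) ≤ Lbar)
    (ha : ∀ j, MemLp (fun ω => a ω j) 2 P) (hc : ∀ j, MemLp (fun ω => c ω j) 2 P)
    (hb : ∀ i, MemLp (fun ω => b ω i) 2 P) (hd : ∀ i, MemLp (fun ω => d ω i) 2 P)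
    (hb0 : ∀ i, ∫ ω, b ω i ∂P = 0) (hd0 : ∀ i, ∫ ω, d ω i ∂P = 0) {ℓ : Ω → Fin N}
    (hℓ : Measurable ℓ) (hunif : ∀ k, P {ω | ℓ ω = k} = (N : ℝ≥0∞)⁻¹)
    (hℓ_acdb : ℓ ⟂ᵢ[P] fun ω => (((a ω, c ω), d ω), b ω))
    (hac_d : (fun ω => (a ω, c ω)) ⟂ᵢ[P] d) (hacd_b : (fun ω => ((a ω, c ω), d ω)) ⟂ᵢ[P] b) :
    ∫ ω, ‖nodeError g 𝒩 x xt (ℓ ω) (a ω) (c ω) (b ω) (d ω)‖ ^ 2 ∂P ≤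
      2 * Lbar ^ 2 * ∫ ω, ∑ j ∈ 𝒩 (ℓ ω), ‖c ω j‖ ^ 2 ∂P
        + 2 * Lbar ^ 2 * ∫ ω, ∑ j ∈ 𝒩 (ℓ ω), ‖a ω j‖ ^ 2 ∂P
        + ∫ ω, ‖d ω (ℓ ω)‖ ^ 2 ∂P + ∫ ω, ‖b ω (ℓ ω)‖ ^ 2 ∂P := by
  have avg := fun (F : Fin N → _ → ℝ) hFm hF =>
    integral_comp_uniform_index hℓ (by simpa using hunif) hℓ_acdb (F := F) hFm hF
  rw [avg (fun i q => ‖nodeError g 𝒩 x xt i q.1.1.1 q.1.1.2 q.2 q.1.2‖ ^ 2)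
      (fun i => (continuous_nodeError (fun k => (hLip k).continuous) x xt i).norm.pow 2
        |>.measurable)
      (fun i => (memLp_nodeError hLip ha hc hb hd i).integrable_norm_pow two_ne_zero),
    avg (fun i q => ∑ j ∈ 𝒩 i, ‖q.1.1.2 j‖ ^ 2) (fun i => by fun_prop)
      (fun i => integrable_finsetSum _ fun j _ => (hc j).integrable_norm_pow two_ne_zero),
    avg (fun i q => ∑ j ∈ 𝒩 i, ‖q.1.1.1 j‖ ^ 2) (fun i => by fun_prop)
      (fun i => integrable_finsetSum _ fun j _ => (ha j).integrable_norm_pow two_ne_zero),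
    avg (fun i q => ‖q.1.2 i‖ ^ 2) (fun i => by fun_prop)
      (fun i => (hd i).integrable_norm_pow two_ne_zero),
    avg (fun i q => ‖q.2 i‖ ^ 2) (fun i => by fun_prop)
      (fun i => (hb i).integrable_norm_pow two_ne_zero)]
  dsimp only
  have := mul_le_mul_of_nonneg_left
    (sum_integral_norm_sq_nodeError_le (𝒩 := 𝒩) (x := x) (xt := xt) hLip hLbar ha hc hb hd
      hb0 hd0 hac_d hacd_b)
    (by positivity : (0 : ℝ) ≤ (Fintype.card (Fin N) : ℝ)⁻¹)
  simp only [sum_add_distrib, ← mul_sum] at this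
  linarith

end NodeErrorMoment

theorem quantization_gradient_error_second_moment_general
    {Ω : Type*} [MeasurableSpace Ω] (P : Measure Ω) [IsProbabilityMeasure P]
    (N : ℕ) (m : Fin N → ℕ)
    (𝒩 : Fin N → Finset (Fin N))
    (g : Fin N → GlobalState N m → GlobalState N m)
    (Lc : Fin N → NNReal) (hLip : ∀ i, LipschitzWith (Lc i) (g i))
    (Lbar : ℝ) (hLbar : ∀ i, (Lc i : ℝ) ≤ Lbar)
    (x xt : GlobalState N m)
    (ℓ : Ω → Fin N) (hℓmeas : Measurable ℓ)
    (hℓunif : ∀ k : Fin N, P {ω | ℓ ω = k} = (N : ENNReal)⁻¹)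
    (a c : Ω → ∀ j : Fin N, EuclideanSpace ℝ (Fin (m j)))
    (b d : Ω → Fin N → GlobalState N m)
    (ha2 : ∀ j, MemLp (fun ω => a ω j) 2 P)
    (hb2 : ∀ i, MemLp (fun ω => b ω i) 2 P)
    (hc2 : ∀ j, MemLp (fun ω => c ω j) 2 P)
    (hd2 : ∀ i, MemLp (fun ω => d ω i) 2 P)
    (hb0 : ∀ i, ∫ ω, b ω i ∂P = 0)
    (hd0 : ∀ i, ∫ ω, d ω i ∂P = 0)
    (hindep : iIndepFun (QErrIdx.rv ℓ a c b d) P)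
    (e : Ω → GlobalState N m)
    (he : ∀ ω, e ω =
      (g (ℓ ω) (addOn x (c ω) (𝒩 (ℓ ω))) - g (ℓ ω) x) + d ω (ℓ ω)
        - (g (ℓ ω) (addOn xt (a ω) (𝒩 (ℓ ω))) - g (ℓ ω) xt) - b ω (ℓ ω)
        + (1 / N : ℝ) • ∑ i : Fin N, (g i (addOn xt (a ω) (𝒩 i)) - g i xt)
        + (1 / N : ℝ) • ∑ i : Fin N, b ω i) :
    ∫ ω, ‖e ω‖ ^ 2 ∂P ≤
      2 * Lbar ^ 2 * ∫ ω, (∑ j ∈ 𝒩 (ℓ ω), ‖c ω j‖ ^ 2) ∂P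
        + 2 * Lbar ^ 2 * ∫ ω, (∑ j ∈ 𝒩 (ℓ ω), ‖a ω j‖ ^ 2) ∂P
        + ∫ ω, ‖d ω (ℓ ω)‖ ^ 2 ∂P + 2 * ∫ ω, ‖b ω (ℓ ω)‖ ^ 2 ∂P
        + (2 / (N : ℝ) ^ 2) * ∑ i : Fin N, ∫ ω, ‖b ω i‖ ^ 2 ∂P := by
  have hmeas := QErrIdx.aemeasurable_rv hℓmeas (fun j => (ha2 j).aemeasurable)
    (fun j => (hc2 j).aemeasurable) (fun i => (hb2 i).aemeasurable) (fun i => (hd2 i).aemeasurable)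
  have he' : e = fun ω => nodeError g 𝒩 x xt (ℓ ω) (a ω) (c ω) (b ω) (d ω) :=
    funext fun ω => by rw [he, nodeError_eq]
  have hb_sel : 0 ≤ ∫ ω, ‖b ω (ℓ ω)‖ ^ 2 ∂P := integral_nonneg fun ω => by positivity
  have hb_sum : 0 ≤ (2 / (N : ℝ) ^ 2) * ∑ i : Fin N, ∫ ω, ‖b ω i‖ ^ 2 ∂P :=
    mul_nonneg (by positivity) (sum_nonneg fun i _ => integral_nonneg fun ω => by positivity)
  rw [he']
  calc _ ≤ _ := integral_norm_sq_nodeError_selected_le hLip hLbar ha2 hc2 hb2 hd2 hb0 hd0 hℓmeas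
        hℓunif (QErrIdx.indepFun_sel_rest hindep hmeas) (QErrIdx.indepFun_ac_d hindep hmeas)
        (QErrIdx.indepFun_acd_b hindep hmeas)
    _ ≤ _ := by linarith

/-- Second-moment bound on the gradient error `e` induced by
quantization in the distributed semi-stochastic proximal gradient algorithm:
`E‖e‖² ≤ 2 L̄² E[∑_{j∈𝒩_ℓ} ‖c_j‖²] + 2 L̄² E[∑_{j∈𝒩_ℓ} ‖a_j‖²] + E‖d_ℓ‖² + 2 E‖b_ℓ‖²
+ (2/N²) ∑_i E‖b_i‖²`. -/
theorem quantization_gradient_error_second_moment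
    {Ω : Type*} [MeasurableSpace Ω] (P : Measure Ω) [IsProbabilityMeasure P]
    (N : ℕ) (hN : 0 < N) (m : Fin N → ℕ)
    (𝒩 : Fin N → Finset (Fin N))
    (f : Fin N → GlobalState N m → ℝ)
    (g : Fin N → GlobalState N m → GlobalState N m)
    (hgrad : ∀ i x, HasGradientAt (f i) (g i x) x)
    (Lc : Fin N → NNReal) (hLip : ∀ i, LipschitzWith (Lc i) (g i))
    (Lbar : ℝ) (hLbar : ∀ i, (Lc i : ℝ) ≤ Lbar)
    (hlocal : ∀ i, ∀ x y : GlobalState N m,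
      (∀ p : (j : Fin N) × Fin (m j), p.1 ∈ 𝒩 i → x p = y p) → f i x = f i y)
    (x xt : GlobalState N m)
    (ℓ : Ω → Fin N) (hℓmeas : Measurable ℓ)
    (hℓunif : ∀ k : Fin N, P {ω | ℓ ω = k} = (N : ENNReal)⁻¹)
    (a c : Ω → ∀ j : Fin N, EuclideanSpace ℝ (Fin (m j)))
    (b d : Ω → Fin N → GlobalState N m)
    (ha2 : ∀ j, MemLp (fun ω => a ω j) 2 P)
    (hb2 : ∀ i, MemLp (fun ω => b ω i) 2 P)
    (hc2 : ∀ j, MemLp (fun ω => c ω j) 2 P)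
    (hd2 : ∀ i, MemLp (fun ω => d ω i) 2 P)
    (ha0 : ∀ j, ∫ ω, a ω j ∂P = 0)
    (hb0 : ∀ i, ∫ ω, b ω i ∂P = 0)
    (hc0 : ∀ j, ∫ ω, c ω j ∂P = 0)
    (hd0 : ∀ i, ∫ ω, d ω i ∂P = 0)
    (hindep : iIndepFun (QErrIdx.rv ℓ a c b d) P)
    (e : Ω → GlobalState N m)
    (he : ∀ ω, e ω =
      (g (ℓ ω) (addOn x (c ω) (𝒩 (ℓ ω))) - g (ℓ ω) x) + d ω (ℓ ω)
        - (g (ℓ ω) (addOn xt (a ω) (𝒩 (ℓ ω))) - g (ℓ ω) xt) - b ω (ℓ ω)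
        + (1 / N : ℝ) • ∑ i : Fin N, (g i (addOn xt (a ω) (𝒩 i)) - g i xt)
        + (1 / N : ℝ) • ∑ i : Fin N, b ω i) :
    ∫ ω, ‖e ω‖ ^ 2 ∂P ≤
      2 * Lbar ^ 2 * ∫ ω, (∑ j ∈ 𝒩 (ℓ ω), ‖c ω j‖ ^ 2) ∂P
        + 2 * Lbar ^ 2 * ∫ ω, (∑ j ∈ 𝒩 (ℓ ω), ‖a ω j‖ ^ 2) ∂P
        + ∫ ω, ‖d ω (ℓ ω)‖ ^ 2 ∂P + 2 * ∫ ω, ‖b ω (ℓ ω)‖ ^ 2 ∂P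
        + (2 / (N : ℝ) ^ 2) * ∑ i : Fin N, ∫ ω, ‖b ω i‖ ^ 2 ∂P :=
  quantization_gradient_error_second_moment_general P N m 𝒩 g Lc hLip Lbar hLbar x xt ℓ hℓmeas
    hℓunif a c b d ha2 hb2 hc2 hd2 hb0 hd0 hindep e he
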